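/- arXiv:1007.4463 — 7 statements merged into one kernel-verified Lean document; each statement's English description precedes it below -/
import Mathlib

section
/- Let n > 2 and let a_1, ..., a_n be nonzero integers such that Z·a_1 + Z·a_2 + ... + Z·a_n = Z (i.e., gcd(a_1,...,a_n) = 1). Then there exists an integer x such that Z·(a_1 + x·a_n) + Z·a_2 + ... + Z·a_{n-1} = Z, i.e., gcd(a_1 + x·a_n, a_2, ..., a_{n-1}) = 1. -/
/-!
Let `g` be the gcd of the middle entries `a 2, …, a (n-1)`; it is nonzero, and no prime divides
all of `a 1`, `a n` and `g`. Taking `x` to be the product of the primes that divide `g` but not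
`a 1`, every prime `p ∣ g` divides exactly one of `a 1` and `x * a n`, hence not their sum. So
`a 1 + x * a n` is coprime to `g`, which is the claim.
-/

theorem Int.exists_prime_dvd_iff_not_dvd (a : ℤ) {g : ℤ} (hg : g ≠ 0) :
    ∃ x : ℤ, ∀ p : ℤ, Prime p → p ∣ g → (p ∣ x ↔ ¬p ∣ a) := by
  refine ⟨∏ q ∈ g.natAbs.primeFactors.filter (fun q : ℕ => ¬(q : ℤ) ∣ a), (q : ℤ),
    fun p hp hpg => ?_⟩
  have hp' : p.natAbs.Prime := Int.prime_iff_natAbs_prime.mp hp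
  have hdvd_prime {q : ℕ} (hq : q.Prime) : p ∣ (q : ℤ) ↔ p.natAbs = q := by
    rw [← Int.natAbs_dvd_natAbs, Int.natAbs_natCast, Nat.prime_dvd_prime_iff_eq hp' hq]
  rw [hp.dvd_finsetProd_iff]
  constructor
  · rintro ⟨q, hq, hpq⟩
    rw [Finset.mem_filter, Nat.mem_primeFactors] at hq
    rw [← Int.natAbs_dvd, (hdvd_prime hq.1.1).mp hpq]
    exact hq.2
  · intro hpa
    refine ⟨p.natAbs, ?_, (hdvd_prime hp').mpr rfl⟩
    rw [Finset.mem_filter, Nat.mem_primeFactors, Int.natAbs_dvd]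
    exact ⟨⟨hp', Int.natAbs_dvd_natAbs.mpr hpg, Int.natAbs_ne_zero.mpr hg⟩, hpa⟩

theorem Int.exists_isCoprime_add_mul {a c g : ℤ} (hg : g ≠ 0)
    (h : ∀ p : ℤ, Prime p → p ∣ a → p ∣ c → ¬p ∣ g) :
    ∃ x : ℤ, IsCoprime (a + x * c) g := by
  obtain ⟨x, hx⟩ := Int.exists_prime_dvd_iff_not_dvd a hg
  refine ⟨x, isCoprime_of_prime_dvd (fun h0 => hg h0.2) fun p hp hsum hpg => ?_⟩
  by_cases hpa : p ∣ a
  · have hpxc : p ∣ x * c := (dvd_add_right hpa).mp hsum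
    have hpc : p ∣ c := (hp.dvd_or_dvd hpxc).resolve_left fun hpx => (hx p hp hpg).mp hpx hpa
    exact h p hp hpa hpc hpg
  · exact hpa ((dvd_add_left (((hx p hp hpg).mpr hpa).mul_right c)).mp hsum)

/-- Stable range 2 for ℤ: if `a 1, ..., a n` (n > 2) are nonzero integers with
`gcd(a 1, ..., a n) = 1`, then there is `x : ℤ` such that
`gcd(a 1 + x * a n, a 2, ..., a (n-1)) = 1`. -/
theorem stable_range_two_int (n : ℕ) (hn : 2 < n) (a : ℕ → ℤ)
    (ha : ∀ i ∈ Finset.Icc 1 n, a i ≠ 0)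
    (hgcd : Finset.gcd (Finset.Icc 1 n) a = 1) :
    ∃ x : ℤ,
      Finset.gcd (Finset.Icc 1 (n - 1))
        (fun i => if i = 1 then a 1 + x * a n else a i) = 1 := by
  set g := (Finset.Icc 2 (n - 1)).gcd a
  have hg : g ≠ 0 := fun h =>
    ha 2 (Finset.mem_Icc.mpr (by omega))
      (Finset.gcd_eq_zero_iff.mp h 2 (Finset.mem_Icc.mpr (by omega)))
  have hunit : ∀ d : ℤ, d ∣ a 1 → d ∣ a n → d ∣ g → IsUnit d := by
    refine fun d h1 han hdg => isUnit_of_dvd_one (hgcd ▸ Finset.dvd_gcd fun i hi => ?_)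
    rw [Finset.mem_Icc] at hi
    obtain rfl | rfl | hmid : i = 1 ∨ i = n ∨ i ∈ Finset.Icc 2 (n - 1) := by
      rw [Finset.mem_Icc]; omega
    exacts [h1, han, hdg.trans (Finset.gcd_dvd hmid)]
  obtain ⟨x, hx⟩ := Int.exists_isCoprime_add_mul hg fun p hp h1 han hpg =>
    hp.not_isUnit (hunit p h1 han hpg)
  refine ⟨x, ?_⟩
  have hmiddle : (Finset.Icc 2 (n - 1)).gcd (fun i => if i = 1 then a 1 + x * a n else a i) = g :=
    Finset.gcd_congr rfl fun i hi => if_neg (by rw [Finset.mem_Icc] at hi; omega)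
  have hIcc : Finset.Icc 1 (n - 1) = insert 1 (Finset.Icc 2 (n - 1)) :=
    (Finset.insert_Icc_add_one_left_eq_Icc (by omega)).symm
  rw [hIcc, Finset.gcd_insert, if_pos rfl, hmiddle, ← Int.coe_gcd,
    Int.isCoprime_iff_gcd_eq_one.mp hx, Nat.cast_one]
end

section
/- Let n > 2 and let m, a_1, ..., a_n be nonzero integers satisfying gcd(m·a_1, m·a_2, ..., m·a_{n-1}, m·a_n + 1) = 1. Then there exist integers x_1, ..., x_{n-3} such that gcd(m·a_1 + x_1·m²·a_3 + ... + x_{n-3}·m²·a_{n-1}, m·a_2, m·a_n + 1) = 1. -/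
/-!
Let `c = gcd(a 3, …, a (n-1))` and `B = gcd(m * a 2, m * a n + 1)`, which is nonzero. No prime
divides all of `m * a 1`, `m² * c` and `B`: such a prime cannot divide `m` (it divides
`m * a n + 1`), hence divides `c`, and then it divides every entry of the gcd assumed to be `1`.
Since `B ≠ 0`, some `m * a 1 + t * m² * c` is coprime to `B`; take for `t` the product of the
prime factors of `B` that do not divide `m * a 1`. Bézout writes `c` as a combination of the
`a (i + 2)`, which gives the `x i`.
-/

open Finset UniqueFactorizationMonoid

theorem exists_isCoprime_add_mul {R : Type*} [CommRing R] [IsDomain R] [IsPrincipalIdealRing R]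
    {A C B : R} (hB : B ≠ 0) (h : ∀ p : R, Prime p → p ∣ A → p ∣ C → ¬p ∣ B) :
    ∃ t, IsCoprime (A + t * C) B := by
  classical
  set t := ∏ q ∈ (factors B).toFinset.filter (¬· ∣ A), q
  have prime_dvd_t_iff {p : R} (hp : Prime p) (hpB : p ∣ B) : p ∣ t ↔ ¬p ∣ A := by
    constructor
    · intro hpt hpA
      obtain ⟨q, hq, hpq⟩ := hp.exists_mem_finset_dvd hpt
      rw [mem_filter, Multiset.mem_toFinset] at hq
      exact hq.2 ((hp.associated_of_dvd (prime_of_factor q hq.1) hpq).dvd_iff_dvd_left.mp hpA)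
    · intro hpA
      obtain ⟨q, hq, hpq⟩ := exists_mem_factors_of_dvd hB hp.irreducible hpB
      refine hpq.dvd.trans (dvd_prod_of_mem _ ?_)
      rw [mem_filter, Multiset.mem_toFinset]
      exact ⟨hq, fun hqA => hpA (hpq.dvd.trans hqA)⟩
  refine ⟨t, isCoprime_of_prime_dvd (fun hAB => hB hAB.2) fun p hp hpAtC hpB => ?_⟩
  by_cases hpA : p ∣ A
  · have hpC : p ∣ C := (hp.dvd_or_dvd ((dvd_add_right hpA).mp hpAtC)).resolve_left
      fun hpt => (prime_dvd_t_iff hp hpB).mp hpt hpA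
    exact h p hp hpA hpC hpB
  · exact hpA ((dvd_add_left (((prime_dvd_t_iff hp hpB).mpr hpA).mul_right C)).mp hpAtC)

theorem no_common_prime_divisor_of_gcd_eq_one {n : ℕ} {m : ℤ} {a : ℕ → ℤ}
    (hgcd : (Icc 1 n).gcd (fun i => if i = n then m * a n + 1 else m * a i) = 1)
    (p : ℤ) (hp : Prime p) (h1 : p ∣ m * a 1)
    (hmid : p ∣ m ^ 2 * (Icc 1 (n - 3)).gcd fun i => a (i + 2)) :
    ¬p ∣ (Int.gcd (m * a 2) (m * a n + 1) : ℤ) := by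
  intro hpB
  have h2 : p ∣ m * a 2 := hpB.trans (Int.gcd_dvd_left _ _)
  have hlast : p ∣ m * a n + 1 := hpB.trans (Int.gcd_dvd_right _ _)
  have hpm : ¬p ∣ m := fun hpm => hp.not_dvd_one ((dvd_add_right (hpm.mul_right _)).mp hlast)
  have hpc : p ∣ (Icc 1 (n - 3)).gcd fun i => a (i + 2) :=
    (hp.dvd_or_dvd hmid).resolve_left fun h => hpm (hp.dvd_of_dvd_pow h)
  refine hp.not_dvd_one (hgcd ▸ dvd_gcd fun i hi => ?_)
  rw [mem_Icc] at hi
  split_ifs with hin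
  · exact hlast
  obtain rfl | rfl | hi3 : i = 1 ∨ i = 2 ∨ 3 ≤ i := by omega
  · exact h1
  · exact h2
  have hi' : i - 2 ∈ Icc 1 (n - 3) := mem_Icc.mpr ⟨by omega, by omega⟩
  have hpai : p ∣ a (i - 2 + 2) := hpc.trans (gcd_dvd (f := fun i => a (i + 2)) hi')
  rw [Nat.sub_add_cancel (by omega)] at hpai
  exact hpai.mul_left m

/-- Refined stable range property of ℤ: if `m, a 1, ..., a n` (n > 2) are nonzero integers
with `gcd(m*a 1, ..., m*a (n-1), m*a n + 1) = 1`, then there are integers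
`x 1, ..., x (n-3)` with
`gcd(m*a 1 + x 1*m²*a 3 + ⋯ + x (n-3)*m²*a (n-1), m*a 2, m*a n + 1) = 1`. -/
theorem refined_stable_range (n : ℕ) (hn : 2 < n) (m : ℤ) (hm : m ≠ 0)
    (a : ℕ → ℤ) (ha : ∀ i ∈ Finset.Icc 1 n, a i ≠ 0)
    (hgcd : Finset.gcd (Finset.Icc 1 n)
      (fun i => if i = n then m * a n + 1 else m * a i) = 1) :
    ∃ x : ℕ → ℤ,
      Int.gcd (m * a 1 + ∑ i ∈ Finset.Icc 1 (n - 3), x i * m ^ 2 * a (i + 2))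
        (Int.gcd (m * a 2) (m * a n + 1) : ℤ) = 1 := by
  have hB : (Int.gcd (m * a 2) (m * a n + 1) : ℤ) ≠ 0 := by
    have ha2 : m * a 2 ≠ 0 := mul_ne_zero hm (ha 2 (mem_Icc.mpr ⟨by omega, by omega⟩))
    rw [Ne, Int.natCast_eq_zero, Int.gcd_eq_zero_iff]
    exact fun h => ha2 h.1
  obtain ⟨t, ht⟩ := exists_isCoprime_add_mul hB (no_common_prime_divisor_of_gcd_eq_one hgcd)
  obtain ⟨g, hg⟩ := gcd_eq_sum_mul (Icc 1 (n - 3)) fun i => a (i + 2)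
  refine ⟨fun i => t * g i, ?_⟩
  rw [hg, mul_sum, mul_sum, Int.isCoprime_iff_gcd_eq_one] at ht
  convert ht using 3
  exact sum_congr rfl fun i _ => by ring
end

section
/- Let n > 2 and let m, a_1, ..., a_n be nonzero integers satisfying gcd(m²·a_1, ..., m²·a_{n-1}, m²·a_n + 1) = 1. Then there exist integers x_1, ..., x_{n-2} such that gcd(m²·a_1 + x_1·m³·a_3 + ... + x_{n-3}·m³·a_{n-1} + x_{n-2}·m·(m²·a_n + 1), m²·a_2) = m. -/
/-!
Factor out `m`: the first entry is `m * (m * a 1 + ∑ x i * b i)`, where `b` runs over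
`m² a 3, …, m² a (n-1), m² a n + 1`, and the second is `m * (m * a 2)`, so it suffices to make the
two cofactors coprime. No prime divides `m * a 1`, `m * a 2` and every `b i`: it would divide
`m² a n + 1`, hence not `m`, hence every generator of the gcd in the hypothesis. When no prime is
common to `A`, `B` and `D ≠ 0`, some `A + x * B` is coprime to `D`: take for `x` the product of the
primes of `D` not dividing `A`. Bézout for the gcd of the `b i` spreads this single multiplier
over the `x i`.
-/

open Finset

namespace Int

theorem exists_isCoprime_add_mul_s2 {a b d : ℤ} (hd : d ≠ 0)
    (H : ∀ p : ℤ, Prime p → p ∣ a → p ∣ b → ¬p ∣ d) :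
    ∃ x : ℤ, IsCoprime (a + x * b) d := by
  classical
  set S := d.natAbs.primeFactors.filter fun p : ℕ => ¬(p : ℤ) ∣ a
  refine ⟨∏ p ∈ S, (p : ℤ),
    isCoprime_of_prime_dvd (fun h => hd h.2) fun q hq hqab hqd => ?_⟩
  by_cases hqa : q ∣ a
  · -- every factor of the product is a prime not dividing `a`
    have hqx : ¬q ∣ ∏ p ∈ S, (p : ℤ) := by
      intro h
      obtain ⟨p, hpS, hqp⟩ := (hq.dvd_finsetProd_iff _).mp h
      obtain ⟨hpd, hpa⟩ := mem_filter.mp hpS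
      have hp : Prime (p : ℤ) := Nat.prime_iff_prime_int.mp (Nat.prime_of_mem_primeFactors hpd)
      exact hpa ((hq.associated_of_dvd hp hqp).dvd_iff_dvd_left.mp hqa)
    rcases hq.dvd_or_dvd ((dvd_add_right hqa).mp hqab) with h | h
    · exact hqx h
    · exact H q hq hqa h hqd
  · have hqS : q.natAbs ∈ S := mem_filter.mpr
      ⟨Nat.mem_primeFactors.mpr ⟨prime_iff_natAbs_prime.mp hq, natAbs_dvd_natAbs.mpr hqd,
        natAbs_ne_zero.mpr hd⟩, by rwa [natAbs_dvd]⟩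
    have hqx : q ∣ ∏ p ∈ S, (p : ℤ) :=
      (dvd_natAbs.mpr dvd_rfl).trans (dvd_prod_of_mem (fun p : ℕ => (p : ℤ)) hqS)
    exact hqa ((dvd_add_left (hqx.mul_right b)).mp hqab)

theorem exists_isCoprime_add_sum_mul {ι : Type*} (s : Finset ι) (b : ι → ℤ) {a d : ℤ}
    (hd : d ≠ 0) (H : ∀ p : ℤ, Prime p → p ∣ a → (∀ i ∈ s, p ∣ b i) → ¬p ∣ d) :
    ∃ x : ι → ℤ, IsCoprime (a + ∑ i ∈ s, x i * b i) d := by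
  obtain ⟨g, hg⟩ := s.gcd_eq_sum_mul b
  obtain ⟨y, hy⟩ := exists_isCoprime_add_mul_s2 hd fun p hp hpa hpg =>
    H p hp hpa fun i hi => hpg.trans (gcd_dvd hi)
  refine ⟨fun i => y * g i, ?_⟩
  have hsum : ∑ i ∈ s, y * g i * b i = y * s.gcd b := by
    rw [hg, mul_sum]
    exact sum_congr rfl fun i _ => by ring
  rwa [hsum]

end Int

theorem not_prime_dvd_of_gcd_eq_one {n : ℕ} (hn : 2 < n) {m : ℤ} {a : ℕ → ℤ}
    (hgcd : (Icc 1 n).gcd (fun i => if i = n then m ^ 2 * a n + 1 else m ^ 2 * a i) = 1)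
    {p : ℤ} (hp : Prime p) (h1 : p ∣ m * a 1)
    (hrest : ∀ i ∈ Icc 1 (n - 2),
      p ∣ if i + 2 = n then m ^ 2 * a n + 1 else m ^ 2 * a (i + 2)) :
    ¬p ∣ m * a 2 := by
  intro h2
  have hpc : p ∣ m ^ 2 * a n + 1 := by
    simpa [Nat.sub_add_cancel hn.le] using hrest (n - 2) (mem_Icc.mpr ⟨by omega, le_rfl⟩)
  have hpm : ¬p ∣ m := fun h =>
    hp.not_dvd_one ((dvd_add_right ((h.pow two_ne_zero).mul_right _)).mp hpc)
  refine hp.not_dvd_one (hgcd ▸ dvd_gcd fun i hi => ?_)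
  obtain ⟨hi1, hin⟩ := mem_Icc.mp hi
  obtain rfl | rfl | hi3 : i = 1 ∨ i = 2 ∨ 3 ≤ i := by omega
  · rw [if_neg (by omega)]
    exact ((hp.dvd_or_dvd h1).resolve_left hpm).mul_left _
  · rw [if_neg (by omega)]
    exact ((hp.dvd_or_dvd h2).resolve_left hpm).mul_left _
  · simpa [Nat.sub_add_cancel (by omega : 2 ≤ i)] using
      hrest (i - 2) (mem_Icc.mpr ⟨by omega, by omega⟩)

/-- If `m, a 1, ..., a n` (n > 2) are nonzero integers with
`gcd(m²*a 1, ..., m²*a (n-1), m²*a n + 1) = 1`, then there are integers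
`x 1, ..., x (n-2)` such that
`gcd(m²*a 1 + x 1*m³*a 3 + ⋯ + x (n-3)*m³*a (n-1) + x (n-2)*m*(m²*a n + 1), m²*a 2) = m`
(here `gcd` is the nonnegative gcd, and the right-hand side is `|m|`). -/
theorem gcd_exactly_m (n : ℕ) (hn : 2 < n) (m : ℤ) (hm : m ≠ 0)
    (a : ℕ → ℤ) (ha : ∀ i ∈ Finset.Icc 1 n, a i ≠ 0)
    (hgcd : Finset.gcd (Finset.Icc 1 n)
      (fun i => if i = n then m ^ 2 * a n + 1 else m ^ 2 * a i) = 1) :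
    ∃ x : ℕ → ℤ,
      Int.gcd
        (m ^ 2 * a 1 + (∑ i ∈ Finset.Icc 1 (n - 3), x i * m ^ 3 * a (i + 2))
          + x (n - 2) * m * (m ^ 2 * a n + 1))
        (m ^ 2 * a 2) = m.natAbs := by
  obtain ⟨k, rfl⟩ : ∃ k, n = k + 3 := ⟨n - 3, by omega⟩
  set b : ℕ → ℤ := fun i => if i + 2 = k + 3 then m ^ 2 * a (k + 3) + 1 else m ^ 2 * a (i + 2)
  have ha2 : a 2 ≠ 0 := ha 2 (mem_Icc.mpr ⟨by omega, by omega⟩)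
  obtain ⟨x, hx⟩ := Int.exists_isCoprime_add_sum_mul (Icc 1 (k + 1)) b (mul_ne_zero hm ha2)
    fun p hp h1 hb => not_prime_dvd_of_gcd_eq_one hn hgcd hp h1 hb
  refine ⟨x, ?_⟩
  have hsplit : ∑ i ∈ Icc 1 (k + 1), x i * b i
      = ∑ i ∈ Icc 1 k, x i * (m ^ 2 * a (i + 2)) + x (k + 1) * (m ^ 2 * a (k + 3) + 1) := by
    rw [sum_Icc_succ_top (by omega)]
    congr 1
    · exact sum_congr rfl fun i hi => by simp only [b, if_neg (by grind : i + 2 ≠ k + 3)]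
    · simp [b]
  have hscale : ∑ i ∈ Icc 1 k, x i * m ^ 3 * a (i + 2)
      = m * ∑ i ∈ Icc 1 k, x i * (m ^ 2 * a (i + 2)) := by
    rw [mul_sum]
    exact sum_congr rfl fun i _ => by ring
  have hfirst : m ^ 2 * a 1 + (∑ i ∈ Icc 1 k, x i * m ^ 3 * a (i + 2))
      + x (k + 1) * m * (m ^ 2 * a (k + 3) + 1)
      = m * (m * a 1 + ∑ i ∈ Icc 1 (k + 1), x i * b i) := by
    rw [hsplit]
    linear_combination hscale
  simp only [Nat.add_sub_cancel, show k + 3 - 2 = k + 1 by omega]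
  rw [hfirst, show m ^ 2 * a 2 = m * (m * a 2) by ring, Int.gcd_mul_left,
    Int.isCoprime_iff_gcd_eq_one.mp hx, mul_one]
end

section
/- Let n ≥ 2 and m ≥ 1. The quotient group Γ_n(m)/Γ_n(m²) is isomorphic to (Z/mZ)^{n²−1}, the direct product of n²−1 copies of the cyclic group of order m. -/
/-- The principal congruence subgroup `Γ_n(m)` of `SL_n(ℤ)`. -/
def Gamma (n m : ℕ) : Subgroup (Matrix.SpecialLinearGroup (Fin n) ℤ) :=
  (Matrix.SpecialLinearGroup.map (n := Fin n) (Int.castRingHom (ZMod m))).ker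

instance (n m k : ℕ) : ((Gamma n k).subgroupOf (Gamma n m)).Normal :=
  Subgroup.Normal.subgroupOf (MonoidHom.normal_ker _) _

/-!
Every `g ∈ Γ_n(m)` is `1 + m • A` for a unique integer matrix `A`, and
`(1 + m • A) * (1 + m • B) = 1 + m • (A + B + m • (A * B))`, so `g ↦ A mod m` is a homomorphism
whose kernel is `Γ_n(m²)`. Since `det (1 + m • A) ≡ 1 + m * tr A (mod m²)`, its image consists of
trace-zero matrices, and a trace-zero matrix is determined by its `n² - 1` entries away from one
diagonal corner `(i₀, i₀)`. Every pattern of such entries is attained: off-diagonal ones by the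
transvections `1 + m c E_ij`, diagonal ones by conjugating `1 + m c E_{i i₀}` with `1 + E_{i₀ i}`.
-/

open Matrix

namespace Matrix

theorem map_intCast_eq_zero_iff {ι κ : Type*} {m : ℕ} (M : Matrix ι κ ℤ) :
    M.map (Int.castRingHom (ZMod m)) = 0 ↔ ∃ A, M = (m : ℤ) • A := by
  constructor
  · intro h
    refine ⟨M.map (· / (m : ℤ)), ext fun i j => ?_⟩
    have hdvd : (m : ℤ) ∣ M i j := (ZMod.intCast_zmod_eq_zero_iff_dvd _ _).1 congr($h i j)
    simp [Int.mul_ediv_cancel' hdvd]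
  · rintro ⟨A, rfl⟩
    ext i j
    simp

def scaledDiff {ι : Type*} [DecidableEq ι] (m : ℤ) (M : Matrix ι ι ℤ) : Matrix ι ι ℤ :=
  (M - 1).map (· / m)

theorem scaledDiff_one_add_smul {ι : Type*} [DecidableEq ι] {m : ℤ} (hm : m ≠ 0)
    (A : Matrix ι ι ℤ) : scaledDiff m (1 + m • A) = A := by
  ext i j
  simp [scaledDiff, Int.mul_ediv_cancel_left _ hm]

theorem one_add_smul_mul_one_add_smul {R ι : Type*} [Fintype ι] [DecidableEq ι] [CommRing R]
    (r : R) (A B : Matrix ι ι R) :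
    (1 + r • A) * (1 + r • B) = 1 + r • (A + B + r • (A * B)) := by
  simp only [add_mul, mul_add, one_mul, mul_one, smul_mul_smul_comm, smul_add, smul_smul]
  abel

theorem mul_one_add_smul_mul {R ι : Type*} [Fintype ι] [DecidableEq ι] [CommRing R]
    {P Q : Matrix ι ι R} (hPQ : P * Q = 1) (r : R) (A : Matrix ι ι R) :
    P * (1 + r • A) * Q = 1 + r • (P * A * Q) := by
  rw [mul_add, mul_one, add_mul, hPQ, mul_smul_comm, smul_mul_assoc]

theorem dvd_trace_of_det_one_add_smul {R ι : Type*} [Fintype ι] [DecidableEq ι] [CommRing R]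
    [IsDomain R] {r : R} (hr : r ≠ 0) {A : Matrix ι ι R} (h : det (1 + r • A) = 1) :
    r ∣ trace A := by
  rw [det_one_add_smul] at h
  set e := (det (1 + (Polynomial.X : Polynomial R) • A.map Polynomial.C)).divX.divX.eval r
  refine ⟨-e, mul_right_cancel₀ hr ?_⟩
  linear_combination h

theorem one_add_single_mul_single_mul_one_add_single_neg {R ι : Type*} [Fintype ι]
    [DecidableEq ι] [Ring R] (i j : ι) (c : R) :
    (1 + single j i 1) * single i j c * (1 + single j i (-1)) =
      single i j c + single j j c - single i i c - single j i c := by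
  simp [add_mul, mul_add, sub_eq_add_neg, single_neg, add_assoc]

abbrev OffCorner {ι : Type*} (i₀ : ι) := {p : ι × ι // p ≠ (i₀, i₀)}

theorem card_offCorner {ι : Type*} [Fintype ι] [DecidableEq ι] (i₀ : ι) :
    Fintype.card (OffCorner i₀) = Fintype.card ι ^ 2 - 1 := by
  rw [Fintype.card_subtype_compl, Fintype.card_subtype_eq, Fintype.card_prod, sq]

@[simps]
def restrictOffCorner {ι R : Type*} [AddCommMonoid R] (i₀ : ι) :
    Matrix ι ι R →+ (OffCorner i₀ → R) where
  toFun A p := A p.1.1 p.1.2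
  map_zero' := rfl
  map_add' _ _ := rfl

theorem eq_zero_of_trace_eq_zero_of_restrictOffCorner_eq_zero {ι R : Type*} [Fintype ι]
    [AddCommMonoid R] {i₀ : ι} {A : Matrix ι ι R} (htr : trace A = 0)
    (hA : restrictOffCorner i₀ A = 0) : A = 0 := by
  have hoff : ∀ i j, (i, j) ≠ (i₀, i₀) → A i j = 0 := fun i j h => congr_fun hA ⟨(i, j), h⟩
  have hcorner : A i₀ i₀ = 0 :=
    calc A i₀ i₀ = ∑ i, A.diag i :=
          (Finset.sum_eq_single i₀ (fun i _ hi => hoff i i (by simp [hi])) (by simp)).symm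
      _ = 0 := htr
  ext i j
  by_cases h : (i, j) = (i₀, i₀)
  · obtain ⟨rfl, rfl⟩ := Prod.mk.inj h
    exact hcorner
  · exact hoff i j h

theorem restrictOffCorner_single {ι R : Type*} [DecidableEq ι] [AddCommMonoid R] {i₀ i j : ι}
    (h : (i, j) ≠ (i₀, i₀)) (c : R) :
    restrictOffCorner i₀ (single i j c) = Pi.single ⟨(i, j), h⟩ c := by
  ext ⟨⟨a, b⟩, hab⟩
  simp [single_apply, Pi.single_apply, eq_comm]

theorem restrictOffCorner_single_self {ι R : Type*} [DecidableEq ι] [AddCommMonoid R] (i₀ : ι)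
    (c : R) : restrictOffCorner i₀ (single i₀ i₀ c) = 0 := by
  ext ⟨⟨a, b⟩, hab⟩
  simp only [restrictOffCorner_apply, single_apply, Pi.zero_apply]
  exact if_neg fun h => hab (by rw [← h.1, ← h.2])

end Matrix

theorem mem_Gamma_iff {n m : ℕ} {g : SpecialLinearGroup (Fin n) ℤ} :
    g ∈ Gamma n m ↔ ∃ A, (g : Matrix (Fin n) (Fin n) ℤ) = 1 + (m : ℤ) • A := by
  have hcoe : SpecialLinearGroup.map (Int.castRingHom (ZMod m)) g = 1 ↔
      (Int.castRingHom (ZMod m)).mapMatrix (g : Matrix (Fin n) (Fin n) ℤ) = 1 :=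
    Subtype.ext_iff
  rw [Gamma, MonoidHom.mem_ker, hcoe, ← sub_eq_zero, ← map_one (Int.castRingHom (ZMod m)).mapMatrix,
    ← map_sub, RingHom.mapMatrix_apply, map_intCast_eq_zero_iff]
  simp only [sub_eq_iff_eq_add']

namespace Gamma

variable {n m : ℕ}

theorem coe_transvection_mul {i j : Fin n} (hij : i ≠ j) (c : ℤ) :
    (SpecialLinearGroup.transvection hij ((m : ℤ) * c) : Matrix (Fin n) (Fin n) ℤ) =
      1 + (m : ℤ) • single i j c := by
  rw [SpecialLinearGroup.transvection_coe, smul_single, smul_eq_mul]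

theorem transvection_mem {i j : Fin n} (hij : i ≠ j) (c : ℤ) :
    SpecialLinearGroup.transvection hij ((m : ℤ) * c) ∈ Gamma n m :=
  mem_Gamma_iff.2 ⟨_, coe_transvection_mul hij c⟩

variable [NeZero m]

theorem scaledDiff_mul (g h : Gamma n m) :
    scaledDiff m ((g * h : Gamma n m) : Matrix (Fin n) (Fin n) ℤ) =
      scaledDiff m (g : Matrix (Fin n) (Fin n) ℤ) + scaledDiff m (h : Matrix (Fin n) (Fin n) ℤ) +
        (m : ℤ) • (scaledDiff m (g : Matrix (Fin n) (Fin n) ℤ) *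
          scaledDiff m (h : Matrix (Fin n) (Fin n) ℤ)) := by
  obtain ⟨A, hA⟩ := mem_Gamma_iff.1 g.2
  obtain ⟨B, hB⟩ := mem_Gamma_iff.1 h.2
  have hmul : ((g * h : Gamma n m) : Matrix (Fin n) (Fin n) ℤ) = g * h := rfl
  simp only [hmul, hA, hB, one_add_smul_mul_one_add_smul, scaledDiff_one_add_smul (NeZero.ne _)]

variable (n m) in
def scaledDiffHom : Gamma n m →* Multiplicative (Matrix (Fin n) (Fin n) (ZMod m)) where
  toFun g := .ofAdd ((Int.castRingHom (ZMod m)).mapMatrix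
    (scaledDiff m (g : Matrix (Fin n) (Fin n) ℤ)))
  map_one' := by simp [scaledDiff]
  map_mul' g h := by
    have hm : (Int.castRingHom (ZMod m)).mapMatrix
        ((m : ℤ) • (scaledDiff m (g : Matrix (Fin n) (Fin n) ℤ) *
          scaledDiff m (h : Matrix (Fin n) (Fin n) ℤ))) = 0 :=
      (map_intCast_eq_zero_iff _).2 ⟨_, rfl⟩
    rw [scaledDiff_mul, map_add, hm, add_zero, map_add, ofAdd_add]

theorem scaledDiffHom_apply {g : Gamma n m} {A : Matrix (Fin n) (Fin n) ℤ}
    (hA : (g : Matrix (Fin n) (Fin n) ℤ) = 1 + (m : ℤ) • A) :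
    (scaledDiffHom n m g).toAdd = (Int.castRingHom (ZMod m)).mapMatrix A := by
  simp only [scaledDiffHom, MonoidHom.coe_mk, OneHom.coe_mk, toAdd_ofAdd, hA,
    scaledDiff_one_add_smul (NeZero.ne _)]

theorem ker_scaledDiffHom :
    (scaledDiffHom n m).ker = (Gamma n (m ^ 2)).subgroupOf (Gamma n m) := by
  ext g
  obtain ⟨A, hA⟩ := mem_Gamma_iff.1 g.2
  rw [MonoidHom.mem_ker, Subgroup.mem_subgroupOf, mem_Gamma_iff, ← toAdd_eq_zero,
    scaledDiffHom_apply hA, RingHom.mapMatrix_apply, map_intCast_eq_zero_iff, hA]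
  simp only [add_right_inj, pow_two, Nat.cast_mul, mul_smul, smul_right_inj (NeZero.ne (m : ℤ))]

theorem trace_scaledDiffHom (g : Gamma n m) : trace (scaledDiffHom n m g).toAdd = 0 := by
  obtain ⟨A, hA⟩ := mem_Gamma_iff.1 g.2
  have hdet : det (1 + (m : ℤ) • A) = 1 := hA ▸ (g : SpecialLinearGroup (Fin n) ℤ).2
  obtain ⟨c, hc⟩ := dvd_trace_of_det_one_add_smul (NeZero.ne _) hdet
  rw [scaledDiffHom_apply hA, RingHom.mapMatrix_apply, ← AddMonoidHom.map_trace, hc]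
  simp

theorem scaledDiffHom_transvection {i j : Fin n} (hij : i ≠ j) (c : ℤ) :
    (scaledDiffHom n m ⟨_, transvection_mem hij c⟩).toAdd = single i j (c : ZMod m) := by
  rw [scaledDiffHom_apply (coe_transvection_mul hij c), RingHom.mapMatrix_apply, map_single,
    eq_intCast]

theorem scaledDiffHom_conj (h : SpecialLinearGroup (Fin n) ℤ) (g : Gamma n m)
    {A : Matrix (Fin n) (Fin n) ℤ} (hA : (g : Matrix (Fin n) (Fin n) ℤ) = 1 + (m : ℤ) • A) :
    (scaledDiffHom n m ⟨h * g * h⁻¹, (MonoidHom.normal_ker _).conj_mem _ g.2 h⟩).toAdd =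
      (Int.castRingHom (ZMod m)).mapMatrix
        ((h : Matrix (Fin n) (Fin n) ℤ) * A *
          ((h⁻¹ : SpecialLinearGroup (Fin n) ℤ) : Matrix (Fin n) (Fin n) ℤ)) := by
  apply scaledDiffHom_apply
  have hinv : (h : Matrix (Fin n) (Fin n) ℤ) * (h⁻¹ : SpecialLinearGroup (Fin n) ℤ) = 1 :=
    congrArg Subtype.val (mul_inv_cancel h)
  rw [← mul_one_add_smul_mul hinv, ← hA]
  rfl

variable (m) in
def offCornerHom (i₀ : Fin n) : Gamma n m →* Multiplicative (OffCorner i₀ → ZMod m) :=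
  (AddMonoidHom.toMultiplicative (restrictOffCorner i₀)).comp (scaledDiffHom n m)

theorem ker_offCornerHom (i₀ : Fin n) : (offCornerHom m i₀).ker = (scaledDiffHom n m).ker := by
  ext g
  simp only [MonoidHom.mem_ker, offCornerHom, MonoidHom.coe_comp, Function.comp_apply,
    AddMonoidHom.toMultiplicative_apply_apply, ← toAdd_eq_zero, toAdd_ofAdd]
  refine ⟨eq_zero_of_trace_eq_zero_of_restrictOffCorner_eq_zero (trace_scaledDiffHom g), ?_⟩
  intro h
  rw [h, map_zero]

theorem single_mem_range_offCornerHom_of_ne {i₀ i j : Fin n} (hij : i ≠ j)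
    (h : (i, j) ≠ (i₀, i₀)) (c : ZMod m) :
    Multiplicative.ofAdd (Pi.single ⟨(i, j), h⟩ c) ∈ (offCornerHom m i₀).range := by
  obtain ⟨c, rfl⟩ := ZMod.intCast_surjective c
  refine ⟨⟨_, transvection_mem hij c⟩, ?_⟩
  simp only [offCornerHom, MonoidHom.coe_comp, Function.comp_apply,
    AddMonoidHom.toMultiplicative_apply_apply, scaledDiffHom_transvection,
    restrictOffCorner_single h]

theorem single_mem_range_offCornerHom_diag {i₀ i : Fin n} (h : (i, i) ≠ (i₀, i₀)) (c : ZMod m) :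
    Multiplicative.ofAdd (Pi.single ⟨(i, i), h⟩ c) ∈ (offCornerHom m i₀).range := by
  have hi : i ≠ i₀ := fun hi => h (hi ▸ rfl)
  have h₁ : (i, i₀) ≠ (i₀, i₀) := by simp [hi]
  have h₂ : (i₀, i) ≠ (i₀, i₀) := by simp [hi]
  obtain ⟨c, rfl⟩ := ZMod.intCast_surjective c
  set T := SpecialLinearGroup.transvection hi.symm (1 : ℤ)
  set g : Gamma n m := ⟨_, transvection_mem hi c⟩
  have hT : (T : Matrix (Fin n) (Fin n) ℤ) = 1 + single i₀ i 1 := rfl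
  have hTinv : ((T⁻¹ : SpecialLinearGroup (Fin n) ℤ) : Matrix (Fin n) (Fin n) ℤ) =
      1 + single i₀ i (-1) := by
    rw [SpecialLinearGroup.transvection_inv]; rfl
  set x := offCornerHom m i₀ ⟨T * g * T⁻¹, (MonoidHom.normal_ker _).conj_mem _ g.2 T⟩
  have hx : x.toAdd = Pi.single ⟨(i, i₀), h₁⟩ (c : ZMod m) - Pi.single ⟨(i, i), h⟩ (c : ZMod m) -
      Pi.single ⟨(i₀, i), h₂⟩ (c : ZMod m) := by
    simp only [x, offCornerHom, MonoidHom.coe_comp, Function.comp_apply,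
      AddMonoidHom.toMultiplicative_apply_apply, toAdd_ofAdd,
      scaledDiffHom_conj T g (coe_transvection_mul hi c), hT, hTinv,
      one_add_single_mul_single_mul_one_add_single_neg, map_sub, map_add,
      RingHom.mapMatrix_apply, map_single, restrictOffCorner_single h,
      restrictOffCorner_single h₁, restrictOffCorner_single h₂, restrictOffCorner_single_self,
      add_zero, eq_intCast]
  have hdecomp : Pi.single ⟨(i, i), h⟩ (c : ZMod m) = Pi.single ⟨(i, i₀), h₁⟩ (c : ZMod m) -
      Pi.single ⟨(i₀, i), h₂⟩ (c : ZMod m) - x.toAdd := by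
    rw [hx]; abel
  rw [← Subgroup.mem_toAddSubgroup', hdecomp]
  refine sub_mem (sub_mem ?_ ?_) ?_ <;> rw [Subgroup.mem_toAddSubgroup']
  · exact single_mem_range_offCornerHom_of_ne hi h₁ _
  · exact single_mem_range_offCornerHom_of_ne hi.symm h₂ _
  · exact ⟨_, rfl⟩

theorem offCornerHom_surjective (i₀ : Fin n) : Function.Surjective (offCornerHom m i₀) := by
  have hsingle : ∀ p c, Multiplicative.ofAdd (Pi.single p c) ∈ (offCornerHom m i₀).range := by
    rintro ⟨⟨i, j⟩, h⟩ c
    rcases eq_or_ne i j with rfl | hij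
    · exact single_mem_range_offCornerHom_diag h c
    · exact single_mem_range_offCornerHom_of_ne hij h c
  intro x
  rw [← MonoidHom.mem_range, ← ofAdd_toAdd x, ← Finset.univ_sum_single x.toAdd, ofAdd_sum]
  exact Subgroup.prod_mem _ fun p _ => hsingle p _

end Gamma

/-- The quotient `Γ_n(m) / Γ_n(m²)` is isomorphic to `(ℤ/mℤ)^(n²-1)`. -/
theorem gamma_quotient_iso (n m : ℕ) (hn : 2 ≤ n) (hm : 1 ≤ m) :
    Nonempty
      ((↥(Gamma n m) ⧸ (Gamma n (m ^ 2)).subgroupOf (Gamma n m)) ≃*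
        Multiplicative (Fin (n ^ 2 - 1) → ZMod m)) := by
  have : NeZero m := ⟨by omega⟩
  let i₀ : Fin n := ⟨0, by omega⟩
  let e : Fin (n ^ 2 - 1) ≃ OffCorner i₀ :=
    (Fintype.equivFinOfCardEq (by rw [card_offCorner, Fintype.card_fin])).symm
  have hker : (Gamma n (m ^ 2)).subgroupOf (Gamma n m) = (Gamma.offCornerHom m i₀).ker := by
    rw [Gamma.ker_offCornerHom, Gamma.ker_scaledDiffHom]
  exact ⟨(QuotientGroup.quotientMulEquivOfEq hker).trans <|
    (QuotientGroup.quotientKerEquivOfSurjective _ (Gamma.offCornerHom_surjective i₀)).trans <|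
      AddEquiv.toMultiplicative (LinearEquiv.funCongrLeft ℤ (ZMod m) e).toAddEquiv⟩
end

section
/- Let A be a finite abelian group of order N generated by a set S of k elements, and suppose ε > 0 is such that for every nontrivial irreducible unitary representation (equivalently, every nontrivial character) π of A and every unit vector v, max_{s ∈ S} ‖π(s)v − v‖ ≥ ε. Then ε ≤ 2π/(N^{1/k} − 1). -/
/-!
A finite abelian group of order `N` has `N` characters into the circle. Let `m` be the integer
with `m < N^(1/k) ≤ m + 1`, so that `m^k < N`, and cut the circle into `m` arcs of length `2π/m`.
By pigeonhole, two distinct characters `ψ₁, ψ₂` send each `s ∈ S` into the same arc, so the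
nontrivial character `ψ₁ / ψ₂` moves every `s ∈ S` by less than `2π/m ≤ 2π/(N^(1/k) - 1)`.
-/

open Real Set

theorem Nat.floor_sub_div_mul_lt {a b x : ℝ} (hx : x ∈ Ico a b) {m : ℕ} (hm : 0 < m) :
    ⌊(x - a) / (b - a) * m⌋₊ < m := by
  have hab : 0 < b - a := by linarith [hx.1, hx.2]
  rw [Nat.floor_lt (by have := hx.1; positivity)]
  calc (x - a) / (b - a) * m < 1 * m := by
        gcongr
        rw [div_lt_one hab]; linarith [hx.2]
    _ = m := one_mul _

theorem abs_sub_lt_of_floor_sub_div_mul_eq {a b x y : ℝ} (hx : x ∈ Ico a b) (hy : y ∈ Ico a b)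
    {m : ℕ} (hm : 0 < m) (h : ⌊(x - a) / (b - a) * m⌋₊ = ⌊(y - a) / (b - a) * m⌋₊) :
    |x - y| < (b - a) / m := by
  have hab : 0 < b - a := by linarith [hx.1, hx.2]
  have hu : 0 ≤ (x - a) / (b - a) * m := by have := hx.1; positivity
  have hv : 0 ≤ (y - a) / (b - a) * m := by have := hy.1; positivity
  have hfloor : ⌊(x - a) / (b - a) * m⌋ = ⌊(y - a) / (b - a) * m⌋ := by
    rw [← Int.natCast_floor_eq_floor hu, ← Int.natCast_floor_eq_floor hv, h]
  have h1 := Int.abs_sub_lt_one_of_floor_eq_floor hfloor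
  rw [← sub_mul, ← sub_div, sub_sub_sub_cancel_right, abs_mul, abs_div, abs_of_pos hab,
    Nat.abs_cast] at h1
  rwa [lt_div_iff₀ (by positivity), ← div_lt_one hab, mul_div_right_comm]

theorem exists_ne_forall_abs_sub_lt_of_pow_card_lt {α σ : Type*} [Finite σ] {m : ℕ} (hm : 0 < m)
    (hcard : m ^ Nat.card σ < Nat.card α) {a b : ℝ} (f : α → σ → ℝ)
    (hf : ∀ i s, f i s ∈ Ico a b) :
    ∃ i j, i ≠ j ∧ ∀ s, |f i s - f j s| < (b - a) / m := by
  classical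
  have : Finite α := Nat.finite_of_card_ne_zero (by omega)
  have := Fintype.ofFinite α
  have := Fintype.ofFinite σ
  let box : α → σ → Fin m := fun i s ↦ ⟨_, Nat.floor_sub_div_mul_lt (hf i s) hm⟩
  obtain ⟨i, j, hij, hbox⟩ := Fintype.exists_ne_map_eq_of_card_lt box (by
    simpa [Nat.card_eq_fintype_card] using hcard)
  exact ⟨i, j, hij, fun s ↦ abs_sub_lt_of_floor_sub_div_mul_eq (hf i s) (hf j s) hm
    (congrArg Fin.val (congrFun hbox s))⟩

theorem Circle.norm_coe_div_sub_one_le_abs_arg_sub (z w : Circle) :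
    ‖((z / w : Circle) : ℂ) - 1‖ ≤ |Complex.arg z - Complex.arg w| := by
  rw [← exp_arg z, ← exp_arg w, ← Circle.exp_sub, exp_arg, exp_arg, coe_exp, mul_comm]
  exact norm_exp_I_mul_ofReal_sub_one_le

theorem natCard_monoidHom_circle (A : Type*) [CommGroup A] [Finite A] :
    Nat.card (A →* Circle) = Nat.card A := by
  have := Fintype.ofFinite A
  calc Nat.card (A →* Circle) = Nat.card (AddChar (Additive A) Circle) :=
        Nat.card_congr (AddChar.toMonoidHomEquiv (A := Additive A) (M := Circle)).symm
    _ = Nat.card (AddChar (Additive A) ℂ) := Nat.card_congr AddChar.circleEquivComplex.toEquiv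
    _ = Nat.card A := by simp [Nat.card_eq_fintype_card]

theorem exists_nat_lt_le_add_one {x : ℝ} (hx : 0 < x) : ∃ m : ℕ, (m : ℝ) < x ∧ x ≤ m + 1 := by
  have hceil : 1 ≤ ⌈x⌉₊ := Nat.one_le_iff_ne_zero.2 (by positivity)
  refine ⟨⌈x⌉₊ - 1, ?_, ?_⟩ <;> rw [Nat.cast_sub hceil, Nat.cast_one]
  · linarith [Nat.ceil_lt_add_one hx.le]
  · linarith [Nat.le_ceil x]

theorem exists_monoidHom_circle_ne_one_forall_norm_sub_one_lt {A : Type*} [CommGroup A]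
    [Finite A] (S : Finset A) {m : ℕ} (hm : 0 < m) (hcard : m ^ S.card < Nat.card A) :
    ∃ χ : A →* Circle, χ ≠ 1 ∧ ∀ s ∈ S, ‖(χ s : ℂ) - 1‖ < 2 * π / m := by
  obtain ⟨χ₁, χ₂, hne, hclose⟩ :=
    exists_ne_forall_abs_sub_lt_of_pow_card_lt (σ := S) (a := -π) (b := π) hm
    (by rwa [natCard_monoidHom_circle, Nat.card_eq_fintype_card, Fintype.card_coe])
    (fun (χ : A →* Circle) s ↦ -Complex.arg (χ s))
    (fun χ s ↦ ⟨by linarith [Complex.arg_le_pi (χ s)], by linarith [Complex.neg_pi_lt_arg (χ s)]⟩)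
  refine ⟨χ₁ / χ₂, div_ne_one.2 hne, fun s hs ↦ ?_⟩
  calc ‖((χ₁ / χ₂) s : ℂ) - 1‖ ≤ |Complex.arg (χ₁ s) - Complex.arg (χ₂ s)| :=
        Circle.norm_coe_div_sub_one_le_abs_arg_sub _ _
    _ < 2 * π / m := by
        have hclose_s := hclose ⟨s, hs⟩
        rwa [neg_sub_neg, abs_sub_comm, sub_neg_eq_add, ← two_mul] at hclose_s

theorem kazhdan_const_finite_abelian_upper_general
    {A : Type*} [CommGroup A] [Fintype A] [Nontrivial A]
    (S : Finset A)
    (k : ℕ) (hk : S.card = k) (hk0 : 0 < k)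
    (ε : ℝ)
    (h : ∀ χ : A →* Circle, χ ≠ 1 →
      ∃ s ∈ S, ε ≤ ‖((χ s : ℂ)) - 1‖) :
    ε ≤ 2 * Real.pi / ((Fintype.card A : ℝ) ^ ((1 : ℝ) / k) - 1) := by
  set x := (Fintype.card A : ℝ) ^ ((1 : ℝ) / k)
  have hx : 1 < x := Real.one_lt_rpow (by exact_mod_cast Fintype.one_lt_card) (by positivity)
  obtain ⟨m, hmx, hxm⟩ := exists_nat_lt_le_add_one (one_pos.trans hx)
  have hm : 0 < m := by exact_mod_cast (by linarith : (0 : ℝ) < m)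
  have hmk : m ^ S.card < Nat.card A := by
    have hxk : x ^ k = Fintype.card A := by
      simp only [x, one_div]
      exact Real.rpow_inv_natCast_pow (by positivity) hk0.ne'
    have hpow : (m : ℝ) ^ k < Fintype.card A := hxk ▸ pow_lt_pow_left₀ hmx (by positivity) hk0.ne'
    rw [hk, Nat.card_eq_fintype_card]
    exact_mod_cast hpow
  obtain ⟨χ, hχ, hχS⟩ := exists_monoidHom_circle_ne_one_forall_norm_sub_one_lt S hm hmk
  obtain ⟨s, hs, hεs⟩ := h χ hχ
  calc ε ≤ ‖(χ s : ℂ) - 1‖ := hεs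
    _ ≤ 2 * π / m := (hχS s hs).le
    _ ≤ 2 * π / (x - 1) := by gcongr; linarith

/-- Upper bound on the Kazhdan constant of a finite abelian group: if `A` is a finite
abelian group of order `N`, generated by a set `S` of `k` elements, and `ε > 0` is such
that every nontrivial character `χ : A → S¹` satisfies `max_{s ∈ S} |χ s - 1| ≥ ε`,
then `ε ≤ 2π / (N^(1/k) - 1)`. -/
theorem kazhdan_const_finite_abelian_upper
    {A : Type*} [CommGroup A] [Fintype A] [Nontrivial A]
    (S : Finset A) (hS : Subgroup.closure (S : Set A) = ⊤)
    (k : ℕ) (hk : S.card = k) (hk0 : 0 < k)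
    (ε : ℝ) (hε : 0 < ε)
    (h : ∀ χ : A →* Circle, χ ≠ 1 →
      ∃ s ∈ S, ε ≤ ‖((χ s : ℂ)) - 1‖) :
    ε ≤ 2 * Real.pi / ((Fintype.card A : ℝ) ^ ((1 : ℝ) / k) - 1) :=
  kazhdan_const_finite_abelian_upper_general S k hk hk0 ε h
end

section
/- Let n ≥ 3 and m ≥ 1. Every matrix A ∈ Γ_n(m²) can be written as a product E·C, where E is a product of at most 3n − 2 elementary matrices X_{ij}(t) with t divisible by m, and C is (the embedding into SL_n(Z) of) a matrix in Γ_{n−1}(m), i.e., C is block diagonal with an (n−1)×(n−1) block congruent to I mod m and a 1 in the (n,n) entry. -/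
/-!
The last column `v` of `A` is unimodular, with `v ≡ eₙ (mod m²)`. Because `ℤ` has stable range
`2`, a single operation `X_{in}(m s)` (`i < n`) makes the new entries `v₁/m, …, v_{n-1}/m`
generate `ℤ`, after which `n - 1` operations `X_{nj}(m tⱼ)` change `vₙ = 1 + m² a` by exactly `-m² a`.
The resulting matrix `B ≡ I (mod m)` has `B_{nn} = 1`, so `n - 1` operations `X_{in}(-B_{in})`
clear its last column and `n - 1` operations `X_{nj}(·)`, with multipliers read off the last row
of the inverse, clear its last row: `1 + (n - 1) + 2 (n - 1) = 3n - 2` operations in all.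
-/

open Matrix

namespace Int

theorem exists_isCoprime_add_mul_s13 {x y N : ℤ} (hN : N ≠ 0)
    (h : ∀ p : ℤ, Prime p → p ∣ x → p ∣ y → ¬ p ∣ N) :
    ∃ s : ℤ, IsCoprime (x + s * y) N := by
  classical
  set s : ℤ := ∏ p ∈ N.natAbs.primeFactors.filter fun p : ℕ => ¬ (p : ℤ) ∣ x, (p : ℤ)
  refine ⟨s, isCoprime_of_prime_dvd (fun h0 => hN h0.2) fun z hz hzu hzN => ?_⟩
  by_cases hzx : z ∣ x
  · have hzs : ¬ z ∣ s := by
      intro hzs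
      obtain ⟨p, hp, hzp⟩ := (hz.dvd_finsetProd_iff _).mp hzs
      rw [Finset.mem_filter, Nat.mem_primeFactors] at hp
      have hpz : (p : ℤ) ∣ z :=
        (hz.associated_of_dvd (Nat.prime_iff_prime_int.mp hp.1.1) hzp).symm.dvd
      exact hp.2 (hpz.trans hzx)
    have hzy : z ∣ y := by
      have : z ∣ s * y := by simpa using dvd_sub hzu hzx
      exact (hz.dvd_or_dvd this).resolve_left hzs
    exact h z hz hzx hzy hzN
  · have hzs : z ∣ s := by
      rw [← Int.natAbs_dvd]
      refine Finset.dvd_prod_of_mem _ (Finset.mem_filter.mpr ⟨?_, by rwa [Int.natAbs_dvd]⟩)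
      exact Nat.mem_primeFactors.mpr ⟨Int.prime_iff_natAbs_prime.mp hz,
        Int.natAbs_dvd_natAbs.mpr hzN, by simpa using hN⟩
    exact hzx (by simpa using dvd_sub hzu (hzs.mul_right y))

/-- The stable-range property of `ℤ`. -/
theorem exists_span_range_add_single_eq_top {ι : Type*} [Fintype ι] [DecidableEq ι]
    {i₀ i₁ : ι} (h01 : i₀ ≠ i₁) {g : ι → ℤ} {y : ℤ}
    (hg : Ideal.span (insert y (Set.range g)) = ⊤) :
    ∃ i, (i = i₀ ∨ i = i₁) ∧ ∃ s : ℤ, Ideal.span (Set.range (g + Pi.single i (s * y))) = ⊤ := by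
  have mem_span (f : ι → ℤ) (j : ι) : f j ∈ Ideal.span (Set.range f) :=
    Ideal.subset_span ⟨j, rfl⟩
  set N := (Finset.univ.erase i₀).gcd g
  have hN : ∀ j ≠ i₀, N ∣ g j := fun j hj =>
    Finset.gcd_dvd (Finset.mem_erase.mpr ⟨hj, Finset.mem_univ j⟩)
  by_cases hN0 : N = 0
  · have hg0 : ∀ j ≠ i₀, g j = 0 := fun j hj => zero_dvd_iff.mp (hN0 ▸ hN j hj)
    obtain ⟨α, β, hαβ⟩ : ∃ α β, α * g i₀ + β * y = 1 := by
      refine Ideal.mem_span_pair.mp ((Ideal.eq_top_iff_one _).mp (top_le_iff.mp ?_))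
      refine hg ▸ Ideal.span_le.mpr ?_
      rintro _ (rfl | ⟨j, rfl⟩)
      · exact Ideal.subset_span (by simp)
      · obtain rfl | hj := eq_or_ne j i₀
        · exact Ideal.subset_span (by simp)
        · simp [hg0 j hj]
    refine ⟨i₁, Or.inr rfl, β, (Ideal.eq_top_iff_one _).mpr ?_⟩
    rw [← hαβ]
    refine add_mem (Ideal.mul_mem_left _ α ?_) ?_
    · convert mem_span (g + Pi.single i₁ (β * y)) i₀ using 1
      simp [h01]
    · convert mem_span (g + Pi.single i₁ (β * y)) i₁ using 1
      simp [hg0 i₁ h01.symm]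
  · have hcop : ∀ p : ℤ, Prime p → p ∣ g i₀ → p ∣ y → ¬ p ∣ N := fun p hp hpx hpy hpN =>
      hp.not_isUnit <| Ideal.span_singleton_eq_top.mp <| top_le_iff.mp <|
        hg ▸ Ideal.span_le.mpr <| by
          rintro _ (rfl | ⟨j, rfl⟩)
          · exact Ideal.mem_span_singleton.mpr hpy
          · obtain rfl | hj := eq_or_ne j i₀
            · exact Ideal.mem_span_singleton.mpr hpx
            · exact Ideal.mem_span_singleton.mpr (hpN.trans (hN j hj))
    obtain ⟨s, α, β, hαβ⟩ := exists_isCoprime_add_mul_s13 hN0 hcop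
    refine ⟨i₀, Or.inl rfl, s, (Ideal.eq_top_iff_one _).mpr ?_⟩
    rw [← hαβ]
    refine add_mem (Ideal.mul_mem_left _ α ?_) (Ideal.mul_mem_left _ β ?_)
    · convert mem_span (g + Pi.single i₀ (s * y)) i₀ using 1
      simp
    · obtain ⟨c, hc⟩ := Finset.gcd_eq_sum_mul (Finset.univ.erase i₀) g
      rw [show N = _ from hc]
      refine Ideal.sum_mem _ fun j hj => Ideal.mul_mem_right _ _ ?_
      convert mem_span (g + Pi.single i₀ (s * y)) j using 1
      simp [Finset.ne_of_mem_erase hj]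

end Int

namespace Matrix

variable {ι R : Type*} [Fintype ι] [DecidableEq ι] [CommRing R]

theorem one_add_vecMulVec_mul_apply (u v : ι → R) (M : Matrix ι ι R) (i j : ι) :
    ((1 + vecMulVec u v) * M) i j = M i j + u i * (v ᵥ* M) j := by
  simp [add_mul, vecMulVec_mul, vecMulVec_apply]

theorem one_add_vecMulVec_mulVec (u v x : ι → R) :
    (1 + vecMulVec u v) *ᵥ x = x + (v ⬝ᵥ x) • u := by
  simp [add_mulVec, vecMulVec_mulVec]

namespace SpecialLinearGroup

theorem transpose_mul (A B : SpecialLinearGroup ι R) : (A * B)ᵀ = Bᵀ * Aᵀ :=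
  Subtype.ext (Matrix.transpose_mul _ _)

theorem transpose_list_prod (L : List (SpecialLinearGroup ι R)) :
    L.prodᵀ = (L.map transpose).reverse.prod := by
  induction L with
  | nil => exact Subtype.ext transpose_one
  | cons E L ih => simp [transpose_mul, ih]

theorem span_range_apply_eq_top (A : SpecialLinearGroup ι R) (j : ι) :
    Ideal.span (Set.range fun i => A i j) = ⊤ := by
  refine (Ideal.eq_top_iff_one _).mpr (Ideal.mem_span_range_iff_exists_fun.mpr
    ⟨(A⁻¹ : SpecialLinearGroup ι R) j, ?_⟩)
  have := congrFun₂ (congrArg Subtype.val (inv_mul_cancel A)) j j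
  rwa [coe_mul, mul_apply, coe_one, one_apply_eq] at this

def principalCongruenceSubgroup (m : ℕ) : Subgroup (SpecialLinearGroup ι ℤ) :=
  (map (Int.castRingHom (ZMod m))).ker

theorem mem_principalCongruenceSubgroup_iff {m : ℕ} {g : SpecialLinearGroup ι ℤ} :
    g ∈ principalCongruenceSubgroup m ↔ ∀ i j, (m : ℤ) ∣ g i j - (1 : Matrix ι ι ℤ) i j := by
  simp only [principalCongruenceSubgroup, MonoidHom.mem_ker, SpecialLinearGroup.ext_iff,
    map_apply_coe, RingHom.mapMatrix_apply, coe_one, map_apply, eq_intCast]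
  refine forall₂_congr fun i j => ?_
  rw [← dvd_sub_comm, ← ZMod.intCast_eq_intCast_iff_dvd_sub, one_apply, one_apply]
  split_ifs <;> simp

theorem principalCongruenceSubgroup_le_of_dvd {m m' : ℕ} (h : m ∣ m') :
    principalCongruenceSubgroup (ι := ι) m' ≤ principalCongruenceSubgroup m := fun _ hg =>
  mem_principalCongruenceSubgroup_iff.mpr fun i j =>
    (Int.natCast_dvd_natCast.mpr h).trans (mem_principalCongruenceSubgroup_iff.mp hg i j)

def IsElementary (m : ℕ) (E : SpecialLinearGroup ι ℤ) : Prop :=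
  ∃ (i j : ι) (t : ℤ), i ≠ j ∧ (m : ℤ) ∣ t ∧ (E : Matrix ι ι ℤ) = 1 + single i j t

def IsElementaryProduct (m k : ℕ) (g : SpecialLinearGroup ι ℤ) : Prop :=
  ∃ L : List (SpecialLinearGroup ι ℤ), L.length ≤ k ∧ (∀ E ∈ L, IsElementary m E) ∧ L.prod = g

variable {m : ℕ} {E g h : SpecialLinearGroup ι ℤ}

theorem isElementary_transvection {i j : ι} (hij : i ≠ j) {t : ℤ} (ht : (m : ℤ) ∣ t) :
    IsElementary m (transvection hij t) :=
  ⟨i, j, t, hij, ht, rfl⟩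

namespace IsElementary

theorem mem_principalCongruenceSubgroup (hE : IsElementary m E) :
    E ∈ principalCongruenceSubgroup m := by
  obtain ⟨i, j, t, -, ht, hE⟩ := hE
  refine mem_principalCongruenceSubgroup_iff.mpr fun k l => ?_
  rw [hE, add_apply, add_sub_cancel_left, single_apply]
  split_ifs
  exacts [ht, dvd_zero _]

theorem inv (hE : IsElementary m E) : IsElementary m E⁻¹ := by
  obtain ⟨i, j, t, hij, ht, hE⟩ := hE
  obtain rfl : E = transvection hij t := Subtype.ext hE
  rw [transvection_inv]
  exact isElementary_transvection hij ht.neg_right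

theorem transpose (hE : IsElementary m E) : IsElementary m Eᵀ := by
  obtain ⟨i, j, t, hij, ht, hE⟩ := hE
  exact ⟨j, i, t, hij.symm, ht, by simp [hE, transpose_single]⟩

theorem isElementaryProduct (hE : IsElementary m E) : IsElementaryProduct m 1 E :=
  ⟨[E], le_rfl, by simpa using hE, by simp⟩

end IsElementary

namespace IsElementaryProduct

variable {k k' : ℕ}

theorem mono (hg : IsElementaryProduct m k g) (hk : k ≤ k') : IsElementaryProduct m k' g :=
  let ⟨L, hL, hE, hg⟩ := hg
  ⟨L, hL.trans hk, hE, hg⟩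

theorem mul (hg : IsElementaryProduct m k g) (hh : IsElementaryProduct m k' h) :
    IsElementaryProduct m (k + k') (g * h) := by
  obtain ⟨L, hL, hE, rfl⟩ := hg
  obtain ⟨L', hL', hE', rfl⟩ := hh
  refine ⟨L ++ L', by simp; omega, fun E hE'' => ?_, List.prod_append⟩
  rcases List.mem_append.mp hE'' with h | h
  exacts [hE E h, hE' E h]

theorem inv (hg : IsElementaryProduct m k g) : IsElementaryProduct m k g⁻¹ := by
  obtain ⟨L, hL, hE, rfl⟩ := hg
  refine ⟨(L.map (·⁻¹)).reverse, by simpa using hL, ?_, (List.prod_inv_reverse L).symm⟩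
  simpa using fun E hE' => inv_inv E ▸ (hE _ hE').inv

theorem transpose (hg : IsElementaryProduct m k g) : IsElementaryProduct m k gᵀ := by
  obtain ⟨L, hL, hE, rfl⟩ := hg
  refine ⟨(L.map SpecialLinearGroup.transpose).reverse, by simpa using hL, ?_,
    (transpose_list_prod L).symm⟩
  simpa using fun E hE' => (hE E hE').transpose

theorem mem_principalCongruenceSubgroup (hg : IsElementaryProduct m k g) :
    g ∈ principalCongruenceSubgroup m := by
  obtain ⟨L, -, hE, rfl⟩ := hg
  exact Subgroup.list_prod_mem _ fun E hE' => (hE E hE').mem_principalCongruenceSubgroup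

end IsElementaryProduct

theorem exists_isElementaryProduct_coe_eq_one_add_single_vecMulVec (m : ℕ) (i : ι)
    {s : Finset ι} (hi : i ∉ s) {c : ι → ℤ} (hc : ∀ j ∉ s, c j = 0)
    (hm : ∀ j, (m : ℤ) ∣ c j) :
    ∃ g : SpecialLinearGroup ι ℤ, IsElementaryProduct m s.card g ∧
      (g : Matrix ι ι ℤ) = 1 + vecMulVec (Pi.single i 1) c := by
  induction s using Finset.induction_on generalizing c with
  | empty =>
    obtain rfl : c = 0 := funext fun j => hc j (Finset.notMem_empty j)
    exact ⟨1, ⟨[], by simp⟩, by simp⟩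
  | insert a s ha ih =>
    have hia : i ≠ a := fun h => hi (h ▸ Finset.mem_insert_self a s)
    set c' := Function.update c a 0
    obtain ⟨g, hg, hg_coe⟩ := ih (c := c') (fun h => hi (Finset.mem_insert_of_mem h))
      (fun j hj => by by_cases hja : j = a <;> simp [c', hja, hc j, hj])
      (fun j => by by_cases hja : j = a <;> simp [c', hja, hm j])
    refine ⟨transvection hia (c a) * g, ?_, ?_⟩
    · rw [Finset.card_insert_of_notMem ha, add_comm]
      exact (isElementary_transvection hia (hm a)).isElementaryProduct.mul hg
    · have hzero : single i a (c a) * vecMulVec (Pi.single i 1) c' = 0 := by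
        rw [mul_vecMulVec, mulVec_single_one, vecMulVec_eq_zero]
        exact Or.inl (funext fun k => by simp [hia.symm])
      have hsplit :
          vecMulVec (Pi.single i 1) c = single i a (c a) + vecMulVec (Pi.single i 1) c' := by
        ext k l
        simp only [c', add_apply, vecMulVec_apply, single_apply, Pi.single_apply,
          Function.update_apply]
        grind
      rw [coe_mul, hg_coe, transvection_coe, add_mul, one_mul, mul_add, mul_one, hzero, hsplit]
      abel

theorem exists_isElementaryProduct_coe_eq_one_add_vecMulVec_single (m : ℕ) (j : ι)
    {s : Finset ι} (hj : j ∉ s) {c : ι → ℤ} (hc : ∀ i ∉ s, c i = 0)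
    (hm : ∀ i, (m : ℤ) ∣ c i) :
    ∃ g : SpecialLinearGroup ι ℤ, IsElementaryProduct m s.card g ∧
      (g : Matrix ι ι ℤ) = 1 + vecMulVec c (Pi.single j 1) := by
  obtain ⟨g, hg, hg_coe⟩ :=
    exists_isElementaryProduct_coe_eq_one_add_single_vecMulVec m j hj hc hm
  exact ⟨gᵀ, hg.transpose, by simp [hg_coe]⟩

/-- The first operation adds `m s` times row `ℓ` to row `i`, which turns `g` into the unimodular
`g'`; the second adds `∑ⱼ m tⱼ` times row `j` to row `ℓ`, with `t ⬝ᵥ g' = -a` where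
`y = 1 + m² a`. -/
theorem exists_isElementaryProduct_mulVec_apply_eq_one {ℓ i₀ i₁ : ι} (h₀ : i₀ ≠ ℓ)
    (h₁ : i₁ ≠ ℓ) (h01 : i₀ ≠ i₁) {g : ι → ℤ} (hgℓ : g ℓ = 0) {y : ℤ} (hy : (m : ℤ) ^ 2 ∣ y - 1)
    (hspan : Ideal.span (insert y (Set.range g)) = ⊤) :
    ∃ P : SpecialLinearGroup ι ℤ, IsElementaryProduct m (Fintype.card ι) P ∧
      ((P : Matrix ι ι ℤ) *ᵥ ((m : ℤ) • g + y • Pi.single ℓ 1)) ℓ = 1 := by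
  obtain ⟨i, hi, s, hs⟩ := Int.exists_span_range_add_single_eq_top h01 hspan
  have hiℓ : i ≠ ℓ := by rcases hi with rfl | rfl <;> assumption
  set g' := g + Pi.single i (s * y)
  have hg'ℓ : g' ℓ = 0 := by simp [g', hgℓ, hiℓ.symm]
  obtain ⟨a, ha⟩ := hy
  obtain ⟨t, ht⟩ := Ideal.mem_span_range_iff_exists_fun.mp (hs ▸ Submodule.mem_top (x := -a))
  set t' := Function.update t ℓ 0
  have ht'ℓ : t' ℓ = 0 := Function.update_self ..
  have ht' : t' ⬝ᵥ g' = -a := by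
    rw [← ht]
    refine Finset.sum_congr rfl fun j _ => ?_
    obtain rfl | hj := eq_or_ne j ℓ
    · simp [hg'ℓ]
    · simp [t', hj]
  obtain ⟨P₁, hP₁, hP₁_coe⟩ := exists_isElementaryProduct_coe_eq_one_add_single_vecMulVec m i
    (s := {ℓ}) (by simpa using hiℓ) (c := Pi.single ℓ (m * s))
    (fun j hj => by simp [Finset.mem_singleton.not.mp hj])
    (fun j => by rw [Pi.single_apply]; split_ifs; exacts [dvd_mul_right _ _, dvd_zero _])
  obtain ⟨P₂, hP₂, hP₂_coe⟩ := exists_isElementaryProduct_coe_eq_one_add_single_vecMulVec m ℓ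
    (Finset.notMem_erase ℓ Finset.univ) (c := (m : ℤ) • t')
    (fun j hj => by obtain rfl : j = ℓ := (by simpa using hj); simp [ht'ℓ])
    (fun j => dvd_mul_right _ _)
  refine ⟨P₂ * P₁, (hP₂.mul hP₁).mono ?_, ?_⟩
  · have := Fintype.card_pos_iff.mpr ⟨ℓ⟩
    simp only [Finset.card_singleton, Finset.card_erase_of_mem (Finset.mem_univ ℓ),
      Finset.card_univ]
    omega
  have hP₁v : (P₁ : Matrix ι ι ℤ) *ᵥ ((m : ℤ) • g + y • Pi.single ℓ 1) =
      (m : ℤ) • g' + y • Pi.single ℓ 1 := by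
    rw [hP₁_coe, one_add_vecMulVec_mulVec]
    ext j
    obtain rfl | hj := eq_or_ne j i
    · simp [g', hgℓ, hiℓ]
      ring
    · simp [g', hj]
  rw [coe_mul, ← mulVec_mulVec, hP₁v, hP₂_coe, one_add_vecMulVec_mulVec, dotProduct_add,
    smul_dotProduct, smul_dotProduct, dotProduct_smul, dotProduct_smul, ht', dotProduct_single,
    ht'ℓ]
  simp only [Pi.add_apply, Pi.smul_apply, hg'ℓ, Pi.single_eq_same, smul_eq_mul]
  linear_combination ha

theorem exists_isElementaryProduct_mul_apply_eq_one (hι : 3 ≤ Fintype.card ι) (ℓ : ι)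
    {A : SpecialLinearGroup ι ℤ} (hA : A ∈ principalCongruenceSubgroup (m ^ 2)) :
    ∃ P : SpecialLinearGroup ι ℤ, IsElementaryProduct m (Fintype.card ι) P ∧ (P * A) ℓ ℓ = 1 := by
  obtain ⟨i₀, h₀, i₁, h₁, h01⟩ := (Finset.one_lt_card (s := Finset.univ.erase ℓ)).mp (by
    rw [Finset.card_erase_of_mem (Finset.mem_univ ℓ), Finset.card_univ]
    omega)
  have hA' := mem_principalCongruenceSubgroup_iff.mp hA
  choose b hb using fun i => hA' i ℓ
  set g : ι → ℤ := Function.update (fun i => (m : ℤ) * b i) ℓ 0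
  have hcol : (fun i => A i ℓ) = (m : ℤ) • g + A ℓ ℓ • Pi.single ℓ 1 := by
    ext i
    obtain rfl | hi := eq_or_ne i ℓ
    · simp [g]
    · have := hb i
      simp only [one_apply_ne hi, sub_zero, Nat.cast_pow] at this
      simp [g, hi, this]
      ring
  have hspan : Ideal.span (insert (A ℓ ℓ) (Set.range g)) = ⊤ := by
    refine top_le_iff.mp (span_range_apply_eq_top A ℓ ▸ Ideal.span_le.mpr ?_)
    rintro _ ⟨j, rfl⟩
    rw [hcol, Pi.add_apply, Pi.smul_apply, Pi.smul_apply, smul_eq_mul, smul_eq_mul]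
    exact add_mem (Ideal.mul_mem_left _ _ (Ideal.subset_span (Set.mem_insert_of_mem _ ⟨j, rfl⟩)))
      (Ideal.mul_mem_right _ _ (Ideal.subset_span (Set.mem_insert _ _)))
  obtain ⟨P, hP, hPv⟩ := exists_isElementaryProduct_mulVec_apply_eq_one
    (Finset.ne_of_mem_erase h₀) (Finset.ne_of_mem_erase h₁) h01 (by simp [g])
    (by simpa using hA' ℓ ℓ) hspan
  exact ⟨P, hP, by rw [← hcol] at hPv; exact hPv⟩

theorem exists_isElementaryProduct_mul_apply_col_eq_one_apply {B : SpecialLinearGroup ι ℤ}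
    (hB : B ∈ principalCongruenceSubgroup m) {ℓ : ι} (hℓ : B ℓ ℓ = 1) :
    ∃ Q : SpecialLinearGroup ι ℤ, IsElementaryProduct m (Fintype.card ι - 1) Q ∧
      ∀ i, (Q * B) i ℓ = (1 : Matrix ι ι ℤ) i ℓ := by
  set c : ι → ℤ := fun i => (1 : Matrix ι ι ℤ) i ℓ - B i ℓ
  obtain ⟨Q, hQ, hQ_coe⟩ := exists_isElementaryProduct_coe_eq_one_add_vecMulVec_single m ℓ
    (Finset.notMem_erase ℓ Finset.univ) (c := c)
    (fun i hi => by obtain rfl : i = ℓ := (by simpa using hi); simp [c, hℓ])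
    (fun i => dvd_sub_comm.mp (mem_principalCongruenceSubgroup_iff.mp hB i ℓ))
  refine ⟨Q, by simpa using hQ, fun i => ?_⟩
  rw [coe_mul, hQ_coe, one_add_vecMulVec_mul_apply, single_one_vecMul]
  simp [c, hℓ]

theorem exists_isElementaryProduct_mul_apply_row_eq_one_apply {B : SpecialLinearGroup ι ℤ}
    (hB : B ∈ principalCongruenceSubgroup m) {ℓ : ι}
    (hcol : ∀ i, B i ℓ = (1 : Matrix ι ι ℤ) i ℓ) :
    ∃ Q : SpecialLinearGroup ι ℤ, IsElementaryProduct m (Fintype.card ι - 1) Q ∧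
      (∀ j, (Q * B) ℓ j = (1 : Matrix ι ι ℤ) ℓ j) ∧ ∀ i, (Q * B) i ℓ = (1 : Matrix ι ι ℤ) i ℓ := by
  have hinv : ((B⁻¹ * B : SpecialLinearGroup ι ℤ) : Matrix ι ι ℤ) = 1 := by simp
  have hinvℓ : B⁻¹ ℓ ℓ = 1 := by
    have h : ((B⁻¹ * B : SpecialLinearGroup ι ℤ) : Matrix ι ι ℤ) ℓ ℓ = B⁻¹ ℓ ℓ := by
      rw [coe_mul, mul_apply]
      simp [hcol, one_apply]
    rw [← h, hinv, one_apply_eq]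
  set c : ι → ℤ := ((B⁻¹ : SpecialLinearGroup ι ℤ) : Matrix ι ι ℤ) ℓ - (1 : Matrix ι ι ℤ) ℓ
  obtain ⟨Q, hQ, hQ_coe⟩ := exists_isElementaryProduct_coe_eq_one_add_single_vecMulVec m ℓ
    (Finset.notMem_erase ℓ Finset.univ) (c := c)
    (fun j hj => by
      obtain rfl : j = ℓ := (by simpa using hj)
      simp only [c, Pi.sub_apply, hinvℓ, one_apply_eq, sub_self])
    (fun j => mem_principalCongruenceSubgroup_iff.mp (inv_mem hB) ℓ j)
  have hrow : ∀ j, (Q * B) ℓ j = (1 : Matrix ι ι ℤ) ℓ j := fun j => by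
    rw [coe_mul, hQ_coe, one_add_vecMulVec_mul_apply, sub_vecMul, ← mul_apply_eq_vecMul,
      ← mul_apply_eq_vecMul, ← coe_mul, hinv, one_mul]
    simp
  refine ⟨Q, by simpa using hQ, hrow, fun i => ?_⟩
  obtain rfl | hi := eq_or_ne i ℓ
  · exact hrow i
  · rw [coe_mul, hQ_coe, one_add_vecMulVec_mul_apply, hcol]
    simp [hi]

end SpecialLinearGroup

end Matrix

open Matrix.SpecialLinearGroup in
/-- Every `A ∈ Γ_n(m²)` (n ≥ 3) is a product `E·C` where `E` is a product of at most
`3n-2` elementary matrices `X i j t = I + t·E i j` with `m ∣ t`, and `C` is the image of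
a matrix of `Γ_{n-1}(m)` embedded in the upper-left block (last row and column of `C`
are those of the identity, and `C ≡ I mod m`). -/
theorem gamma_m_sq_bounded_product (n m : ℕ) (hn : 3 ≤ n)
    (A : Matrix.SpecialLinearGroup (Fin n) ℤ)
    (hA : ∀ i j : Fin n,
      ((m : ℤ) ^ 2) ∣ ((A : Matrix (Fin n) (Fin n) ℤ) i j - if i = j then 1 else 0)) :
    ∃ L : List (Matrix.SpecialLinearGroup (Fin n) ℤ),
      L.length ≤ 3 * n - 2 ∧
      (∀ E ∈ L, ∃ (i j : Fin n) (t : ℤ), i ≠ j ∧ (m : ℤ) ∣ t ∧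
        (E : Matrix (Fin n) (Fin n) ℤ) = 1 + Matrix.single i j t) ∧
      ∃ C : Matrix.SpecialLinearGroup (Fin n) ℤ,
        (∀ i j : Fin n,
          (m : ℤ) ∣ ((C : Matrix (Fin n) (Fin n) ℤ) i j - if i = j then 1 else 0)) ∧
        (∀ i : Fin n, i ≠ ⟨n - 1, by omega⟩ →
          (C : Matrix (Fin n) (Fin n) ℤ) i ⟨n - 1, by omega⟩ = 0 ∧
          (C : Matrix (Fin n) (Fin n) ℤ) ⟨n - 1, by omega⟩ i = 0) ∧
        (C : Matrix (Fin n) (Fin n) ℤ) ⟨n - 1, by omega⟩ ⟨n - 1, by omega⟩ = 1 ∧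
        A = L.prod * C := by
  set ℓ : Fin n := ⟨n - 1, by omega⟩
  have hA₂ : A ∈ principalCongruenceSubgroup (m ^ 2) :=
    mem_principalCongruenceSubgroup_iff.mpr fun i j => by simpa [Matrix.one_apply] using hA i j
  have hA₁ := principalCongruenceSubgroup_le_of_dvd (dvd_pow_self m two_ne_zero) hA₂
  obtain ⟨P, hP, hPA⟩ := exists_isElementaryProduct_mul_apply_eq_one (by simpa using hn) ℓ hA₂
  have hB := mul_mem hP.mem_principalCongruenceSubgroup hA₁
  obtain ⟨Q₁, hQ₁, hcol⟩ := exists_isElementaryProduct_mul_apply_col_eq_one_apply hB hPA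
  have hB' := mul_mem hQ₁.mem_principalCongruenceSubgroup hB
  obtain ⟨Q₂, hQ₂, hrow, hcol'⟩ := exists_isElementaryProduct_mul_apply_row_eq_one_apply hB' hcol
  have hC := mem_principalCongruenceSubgroup_iff.mp
    (mul_mem hQ₂.mem_principalCongruenceSubgroup hB')
  obtain ⟨L, hL, hE, hprod⟩ := hP.inv.mul (hQ₁.inv.mul hQ₂.inv)
  refine ⟨L, hL.trans (by simp; omega), hE, Q₂ * (Q₁ * (P * A)),
    fun i j => by simpa [Matrix.one_apply] using hC i j,
    fun i hi => ⟨by simpa [hi] using hcol' i, by simpa [hi.symm] using hrow i⟩,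
    by simpa using hrow ℓ, by rw [hprod]; group⟩
end

section
/- Let m ≥ 1, n ≥ 2, and let d = gcd(a_2, ..., a_{n-1}) for nonzero integers a_2,...,a_{n-1} (n ≥ 4), and let a_1, a_n be nonzero integers with gcd(a_1, ..., a_n) = 1. Define x = ∏_{p ∈ A} p where A = {p prime : p ∣ d, p ∤ a_1, p ∤ a_n} (and x = 1 if A = ∅). Then gcd(a_1 + x·a_n, a_2, ..., a_{n-1}) = 1. -/
/-! For a prime `p ∣ d`: if `p ∣ a 1` then `p ∤ a n` (the whole row is unimodular) and `p ∤ x`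
(the primes of `x` avoid `a 1`), so `p ∤ a 1 + x * a n`. If `p ∤ a 1`, then `p` divides `a n` or,
by construction, `x`; either way `p ∣ x * a n`, and again `p ∤ a 1 + x * a n`. -/

def avoidingPrimeProd (d b c : ℤ) : ℤ :=
  ∏ p ∈ d.natAbs.divisors.filter (fun p : ℕ => p.Prime ∧ ¬ (p : ℤ) ∣ b ∧ ¬ (p : ℤ) ∣ c), (p : ℤ)

theorem prime_dvd_avoidingPrimeProd_iff {d b c z : ℤ} (hd : d ≠ 0) (hz : Prime z) (hzd : z ∣ d) :
    z ∣ avoidingPrimeProd d b c ↔ ¬ z ∣ b ∧ ¬ z ∣ c := by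
  have hp : z.natAbs.Prime := Int.prime_iff_natAbs_prime.mp hz
  constructor
  · intro h
    obtain ⟨q, hq, hzq⟩ := (hz.dvd_finsetProd_iff _).mp h
    obtain ⟨-, hq, hqb, hqc⟩ := Finset.mem_filter.mp hq
    have : z.natAbs = q := (Nat.prime_dvd_prime_iff_eq hp hq).mp (Int.natAbs_dvd_natAbs.mpr hzq)
    subst this
    simpa only [Int.natAbs_dvd] using And.intro hqb hqc
  · rintro ⟨hzb, hzc⟩
    refine Int.natAbs_dvd.mp (Finset.dvd_prod_of_mem (fun p : ℕ => (p : ℤ)) ?_)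
    rw [Finset.mem_filter, Nat.mem_divisors, Int.natAbs_dvd, Int.natAbs_dvd]
    exact ⟨⟨Int.natAbs_dvd_natAbs.mpr hzd, Int.natAbs_ne_zero.mpr hd⟩, hp, hzb, hzc⟩

theorem isCoprime_add_avoidingPrimeProd_mul {d b c : ℤ} (hd : d ≠ 0)
    (h : ∀ z : ℤ, Prime z → z ∣ d → z ∣ b → ¬ z ∣ c) :
    IsCoprime (b + avoidingPrimeProd d b c * c) d := by
  refine isCoprime_of_prime_dvd (fun h0 => hd h0.2) fun z hz hzsum hzd => ?_
  have hx := prime_dvd_avoidingPrimeProd_iff (b := b) (c := c) hd hz hzd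
  have hb : z ∣ b ↔ z ∣ avoidingPrimeProd d b c ∨ z ∣ c := by
    rw [← hz.dvd_mul]
    exact ⟨fun hzb => (dvd_add_right hzb).mp hzsum, fun hzxc => (dvd_add_left hzxc).mp hzsum⟩
  have := h z hz hzd
  tauto

theorem explicit_stable_range_general (n : ℕ) (hn : 4 ≤ n)
    (a : ℕ → ℤ) (ha : ∀ i ∈ Finset.Icc 1 n, a i ≠ 0)
    (hgcd : Finset.gcd (Finset.Icc 1 n) a = 1) :
    Finset.gcd (Finset.Icc 1 (n - 1))
      (fun i => if i = 1 then
          a 1 +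
            (∏ p ∈ (Finset.gcd (Finset.Icc 2 (n - 1)) a).natAbs.divisors.filter
              (fun p : ℕ => p.Prime ∧ ¬ ((p : ℤ) ∣ a 1) ∧ ¬ ((p : ℤ) ∣ a n)), (p : ℤ)) * a n
        else a i) = 1 := by
  set d := Finset.gcd (Finset.Icc 2 (n - 1)) a
  have h2 : 2 ∈ Finset.Icc 2 (n - 1) := Finset.mem_Icc.mpr ⟨le_rfl, by omega⟩
  have hd : d ≠ 0 := fun h0 =>
    ha 2 (Finset.mem_Icc.mpr ⟨by omega, by omega⟩) (Finset.gcd_eq_zero_iff.mp h0 2 h2)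
  have hcop : ∀ z : ℤ, Prime z → z ∣ d → z ∣ a 1 → ¬ z ∣ a n := by
    intro z hz hzd hz1 hzn
    refine hz.not_isUnit (isUnit_of_dvd_one (hgcd ▸ Finset.dvd_gcd fun i hi => ?_))
    rw [Finset.mem_Icc] at hi
    obtain rfl | rfl | hi' : i = 1 ∨ i = n ∨ i ∈ Finset.Icc 2 (n - 1) := by
      rw [Finset.mem_Icc]; omega
    exacts [hz1, hzn, hzd.trans (Finset.gcd_dvd hi')]
  have hsplit : Finset.Icc 1 (n - 1) = insert 1 (Finset.Icc 2 (n - 1)) := by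
    ext i; simp only [Finset.mem_Icc, Finset.mem_insert]; omega
  rw [hsplit, Finset.gcd_insert, if_pos rfl,
    Finset.gcd_congr rfl fun i hi => if_neg (by rw [Finset.mem_Icc] at hi; omega), ← Int.coe_gcd]
  -- the product in the goal is `avoidingPrimeProd d (a 1) (a n)` unfolded
  exact_mod_cast Int.isCoprime_iff_gcd_eq_one.mp (isCoprime_add_avoidingPrimeProd_mul hd hcop)

/-- Explicit construction in the proof that ℤ has stable range 2: with
`d = gcd(a 2, ..., a (n-1))` and `x` the product of the primes dividing `d` but dividing
neither `a 1` nor `a n` (`x = 1` if there are none), we have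
`gcd(a 1 + x·a n, a 2, ..., a (n-1)) = 1`. -/
theorem explicit_stable_range (m n : ℕ) (hm : 1 ≤ m) (hn : 4 ≤ n)
    (a : ℕ → ℤ) (ha : ∀ i ∈ Finset.Icc 1 n, a i ≠ 0)
    (hgcd : Finset.gcd (Finset.Icc 1 n) a = 1) :
    Finset.gcd (Finset.Icc 1 (n - 1))
      (fun i => if i = 1 then
          a 1 +
            (∏ p ∈ (Finset.gcd (Finset.Icc 2 (n - 1)) a).natAbs.divisors.filter
              (fun p : ℕ => p.Prime ∧ ¬ ((p : ℤ) ∣ a 1) ∧ ¬ ((p : ℤ) ∣ a n)), (p : ℤ)) * a n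
        else a i) = 1 :=
  explicit_stable_range_general n hn a ha hgcd
end
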